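/- Let O be the ring of integers of a nonarchimedean local field with residue field of order Q and uniformizer absolute value r ∈ (0,1). Then for every n and any z_1,...,z_n ∈ O, Π_{i≠j}|z_i−z_j| ≤ r^{2·T(n)} where T(n) = Σ_{k≥1} (number of ordered pairs (i,j), i≠j, that can be forced into a common ball of radius r^k by pigeonhole) satisfies T(n)/(n(n−1)) → 1/(2(Q−1)) as n→∞; in particular limsup_n d_n(O) ≤ r^{1/(Q−1)}. -/

import Mathlib

/-!
Every `x` with `‖x‖ ≤ 1` is within `‖π‖ = r` of a digit `t ∈ T`, so `x = t + π x'` with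
`‖x'‖ ≤ 1`; the first `k` digits map the unit ball to `T^k` with fibres of diameter `≤ r^k`.
By pigeonhole at least `minCollisions (Q^k) n` ordered pairs of the `z_i` share a level-`k`
fibre, and a pair sharing fibres at `K` levels is `r^K`-close, which gives the product bound.
Since `n²/M - min(n, n²/M) ≤ minCollisions M n ≤ n²/M`, summing the geometric series in
`M = Q^k` gives `2 T(n) ~ n²/(Q - 1)`; taking `n(n-1)`-th roots bounds `d_n`.
-/

/-- The `n`-th diameter of a subset `E` of a nonarchimedean field. -/
noncomputable def dn {F : Type*} [NormedField F] (E : Set F) (n : ℕ) : ℝ :=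
  sSup {x : ℝ | ∃ z : Fin n → F, (∀ i, z i ∈ E) ∧
    x = (∏ ij ∈ Finset.univ.filter (fun ij : Fin n × Fin n => ij.1 ≠ ij.2),
      ‖z ij.1 - z ij.2‖) ^ (((n : ℝ) * (n - 1))⁻¹)}

/-- `pigeonT Q n` is the pigeonhole count: `n` points distributed among the `Q^k` balls
of radius `r^k` (for each level `k ≥ 1`) are forced to produce at least
`b(a+1)a + (Q^k - b)a(a-1)` ordered pairs in a common ball at level `k`, where
`a = ⌊n/Q^k⌋` and `b = n mod Q^k`; `pigeonT Q n` is half the total (unordered count). -/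
noncomputable def pigeonT (Q n : ℕ) : ℝ :=
  ((∑ k ∈ Finset.Icc 1 n,
    ((n % Q ^ k) * (n / Q ^ k + 1) * (n / Q ^ k)
      + (Q ^ k - n % Q ^ k) * (n / Q ^ k) * (n / Q ^ k - 1)) : ℕ) : ℝ) / 2

open Finset Filter Topology

def minCollisions (M n : ℕ) : ℕ :=
  (n % M) * (n / M + 1) * (n / M) + (M - n % M) * (n / M) * (n / M - 1)

lemma minCollisions_cast {R : Type*} [CommRing R] {M : ℕ} (hM : 0 < M) (n : ℕ) :
    (minCollisions M n : R) =
      M * (n / M : ℕ) * ((n / M : ℕ) - 1) + 2 * (n / M : ℕ) * (n % M : ℕ) := by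
  have hb : n % M ≤ M := (Nat.mod_lt n hM).le
  rcases Nat.eq_zero_or_pos (n / M) with h | h
  · simp [minCollisions, h]
  · simp only [minCollisions]
    push_cast [hb, Nat.one_le_iff_ne_zero.2 h.ne']
    ring

/-- On the integers, `g (g - 1)` lies above the line through its values at `a = (∑ g) / #B`
and `a + 1`. -/
lemma minCollisions_le_sum {β : Type*} {B : Finset β} (hB : B.Nonempty) (g : β → ℕ) :
    minCollisions #B (∑ b ∈ B, g b) ≤ ∑ b ∈ B, (g b * g b - g b) := by
  set n := ∑ b ∈ B, g b
  set a : ℤ := ((n / #B : ℕ) : ℤ)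
  have hdiv : (#B : ℤ) * a + (n % #B : ℕ) = ∑ b ∈ B, (g b : ℤ) := by
    unfold a n; exact_mod_cast Nat.div_add_mod n #B
  zify [fun b => Nat.le_mul_self (g b)]
  rw [minCollisions_cast hB.card_pos]
  calc (#B : ℤ) * a * (a - 1) + 2 * a * (n % #B : ℕ)
      = ∑ b ∈ B, (a * (a - 1) + 2 * a * ((g b : ℤ) - a)) := by
        simp only [sum_add_distrib, sum_const, ← mul_sum, sum_sub_distrib, nsmul_eq_mul]
        linear_combination 2 * a * hdiv
    _ ≤ ∑ b ∈ B, ((g b : ℤ) * g b - g b) :=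
        sum_le_sum fun b _ => by nlinarith [Int.le_self_sq ((g b : ℤ) - a)]

lemma minCollisions_le_card_collisions {ι β : Type*} [Fintype ι] [DecidableEq ι] [DecidableEq β]
    (f : ι → β) (B : Finset β) (hf : ∀ i, f i ∈ B) :
    minCollisions #B (Fintype.card ι) ≤ #{p : ι × ι | p.1 ≠ p.2 ∧ f p.1 = f p.2} := by
  rcases isEmpty_or_nonempty ι with _ | ⟨⟨i⟩⟩
  · simp [minCollisions]
  have hcard : Fintype.card ι = ∑ b ∈ B, #{i | f i = b} :=
    card_eq_sum_card_fiberwise fun i _ => hf i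
  have hpairs : #{p : ι × ι | p.1 ≠ p.2 ∧ f p.1 = f p.2} =
      ∑ b ∈ B, #({i | f i = b} : Finset ι).offDiag := by
    rw [card_eq_sum_card_fiberwise (f := fun p : ι × ι => f p.1) fun p _ => hf p.1]
    refine sum_congr rfl fun b _ => congrArg card ?_
    ext ⟨i, j⟩
    simp only [mem_filter, mem_offDiag, mem_univ, true_and]
    grind
  rw [hcard, hpairs]
  simpa only [offDiag_card] using minCollisions_le_sum ⟨f i, hf i⟩ _

lemma minCollisions_le_sq_div {M : ℕ} (hM : 0 < M) (n : ℕ) :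
    (minCollisions M n : ℝ) ≤ (n : ℝ) ^ 2 / M := by
  have hM' : (0 : ℝ) < M := by exact_mod_cast hM
  have hn : (M : ℝ) * (n / M : ℕ) + (n % M : ℕ) = n := by exact_mod_cast Nat.div_add_mod n M
  have ha : (0 : ℝ) ≤ (n / M : ℕ) := Nat.cast_nonneg _
  rw [minCollisions_cast hM, le_div_iff₀ hM', ← hn]
  nlinarith [sq_nonneg ((n % M : ℕ) : ℝ), mul_nonneg (mul_nonneg hM'.le hM'.le) ha]

lemma sq_div_sub_le_minCollisions {M : ℕ} (hM : 0 < M) (n : ℕ) :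
    (n : ℝ) ^ 2 / M - n ≤ minCollisions M n := by
  have hM' : (0 : ℝ) < M := by exact_mod_cast hM
  have hn : (M : ℝ) * (n / M : ℕ) + (n % M : ℕ) = n := by exact_mod_cast Nat.div_add_mod n M
  have hbM : ((n % M : ℕ) : ℝ) ≤ M := by exact_mod_cast (Nat.mod_lt n hM).le
  have hb : (0 : ℝ) ≤ (n % M : ℕ) := Nat.cast_nonneg _
  rw [minCollisions_cast hM, sub_le_iff_le_add, div_le_iff₀ hM', ← hn]
  nlinarith [mul_nonneg hb (sub_nonneg.2 hbM)]

/-- The defect is at most `min(n, n²/M) ≤ √(n · n²/M)`. -/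
lemma sq_div_sub_minCollisions_le {M : ℕ} (hM : 0 < M) (n : ℕ) :
    (n : ℝ) ^ 2 / M - minCollisions M n ≤ √(n * ((n : ℝ) ^ 2 / M)) := by
  have h0 : 0 ≤ (n : ℝ) ^ 2 / M - minCollisions M n :=
    sub_nonneg.2 (minCollisions_le_sq_div hM n)
  refine Real.le_sqrt_of_sq_le ?_
  rw [pow_two]
  refine mul_le_mul ?_ ?_ h0 (Nat.cast_nonneg n)
  · linarith [sq_div_sub_le_minCollisions hM n]
  · linarith [(Nat.cast_nonneg _ : (0 : ℝ) ≤ minCollisions M n)]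

lemma tendsto_sum_Icc_pow {x : ℝ} (h0 : 0 ≤ x) (h1 : x < 1) :
    Tendsto (fun n => ∑ k ∈ Icc 1 n, x ^ k) atTop (𝓝 (x / (1 - x))) := by
  have h := ((hasSum_geometric_of_lt_one h0 h1).mul_left x).tendsto_sum_nat
  refine (h.congr fun n => ?_).trans (by rw [div_eq_mul_inv])
  rw [← Ico_add_one_right_eq_Icc, sum_Ico_eq_sum_range]
  simp [pow_succ', add_comm]

lemma sum_Icc_pow_le {x : ℝ} (h0 : 0 ≤ x) (h1 : x < 1) (n : ℕ) :
    ∑ k ∈ Icc 1 n, x ^ k ≤ x / (1 - x) :=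
  Monotone.ge_of_tendsto (fun _ _ h => sum_le_sum_of_subset_of_nonneg
    (Icc_subset_Icc_right h) fun k _ _ => pow_nonneg h0 k) (tendsto_sum_Icc_pow h0 h1) n

lemma sum_minCollisions_le {Q : ℕ} (hQ : 0 < Q) (n : ℕ) :
    (∑ k ∈ Icc 1 n, minCollisions (Q ^ k) n : ℝ) ≤ n ^ 2 * ∑ k ∈ Icc 1 n, (Q : ℝ)⁻¹ ^ k := by
  rw [mul_sum]
  refine sum_le_sum fun k _ => ?_
  rw [inv_pow, ← div_eq_mul_inv]
  exact_mod_cast minCollisions_le_sq_div (pow_pos hQ k) n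

lemma sum_sub_le_sum_minCollisions {Q : ℕ} (hQ : 0 < Q) (n : ℕ) :
    (n : ℝ) ^ 2 * ∑ k ∈ Icc 1 n, (Q : ℝ)⁻¹ ^ k - n * √n * ∑ k ∈ Icc 1 n, (√Q)⁻¹ ^ k ≤
      (∑ k ∈ Icc 1 n, minCollisions (Q ^ k) n : ℝ) := by
  rw [mul_sum, mul_sum, ← sum_sub_distrib]
  refine sum_le_sum fun k _ => ?_
  have h := sq_div_sub_minCollisions_le (pow_pos hQ k) n
  have hsq : (n : ℝ) * (n ^ 2 / (Q ^ k : ℕ)) = (n * √n * (√Q)⁻¹ ^ k) ^ 2 := by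
    rw [mul_pow, mul_pow, Real.sq_sqrt n.cast_nonneg, ← pow_mul, mul_comm k, pow_mul, inv_pow,
      Real.sq_sqrt (Nat.cast_nonneg Q)]
    push_cast; ring
  rw [hsq, Real.sqrt_sq (by positivity)] at h
  rw [inv_pow, ← div_eq_mul_inv]
  push_cast at h ⊢
  linarith

lemma tendsto_sum_minCollisions_div_sq {Q : ℕ} (hQ : 1 < Q) :
    Tendsto (fun n : ℕ => (∑ k ∈ Icc 1 n, minCollisions (Q ^ k) n : ℝ) / n ^ 2) atTop
      (𝓝 ((Q : ℝ) - 1)⁻¹) := by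
  have hQ1 : (1 : ℝ) < Q := by exact_mod_cast hQ
  have hx1 : (Q : ℝ)⁻¹ < 1 := inv_lt_one_of_one_lt₀ hQ1
  have hy1 : (√Q)⁻¹ < 1 := inv_lt_one_of_one_lt₀ (Real.lt_sqrt_of_sq_lt (by simpa using hQ1))
  set G : ℕ → ℝ := fun n => ∑ k ∈ Icc 1 n, (Q : ℝ)⁻¹ ^ k
  set C : ℝ := (√Q)⁻¹ / (1 - (√Q)⁻¹)
  have hG : Tendsto G atTop (𝓝 ((Q : ℝ) - 1)⁻¹) := by
    have hQ0 : (Q : ℝ) - 1 ≠ 0 := by linarith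
    have hQ0' : (Q : ℝ) ≠ 0 := by positivity
    have hlim : (Q : ℝ)⁻¹ / (1 - (Q : ℝ)⁻¹) = ((Q : ℝ) - 1)⁻¹ := by field_simp
    exact hlim ▸ tendsto_sum_Icc_pow (by positivity) hx1
  have hsqrt : Tendsto (fun n : ℕ => (√n)⁻¹) atTop (𝓝 0) :=
    tendsto_inv_atTop_zero.comp (Real.tendsto_sqrt_atTop.comp tendsto_natCast_atTop_atTop)
  refine tendsto_of_tendsto_of_tendsto_of_le_of_le' (by simpa using hG.sub (hsqrt.const_mul C))
    hG ?_ ?_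
  · filter_upwards [eventually_ge_atTop 1] with n hn
    have hn0 : (0 : ℝ) < n := by exact_mod_cast hn
    have hs0 : 0 < √(n : ℝ) := Real.sqrt_pos.2 hn0
    have key : (n : ℝ) ^ 2 * (√n)⁻¹ = n * √n := by
      rw [eq_comm, ← div_eq_mul_inv, eq_div_iff hs0.ne', mul_assoc,
        Real.mul_self_sqrt hn0.le, pow_two]
    rw [le_div_iff₀ (by positivity)]
    calc (G n - C * (√n)⁻¹) * n ^ 2 = n ^ 2 * G n - C * (n ^ 2 * (√n)⁻¹) := by ring
      _ ≤ n ^ 2 * G n - n * √n * ∑ k ∈ Icc 1 n, (√Q)⁻¹ ^ k := by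
          rw [key, mul_comm C]
          gcongr
          exact sum_Icc_pow_le (by positivity) hy1 n
      _ ≤ _ := sum_sub_le_sum_minCollisions (by omega) n
  · filter_upwards [eventually_ge_atTop 1] with n hn
    have hn0 : (0 : ℝ) < n := by exact_mod_cast hn
    rw [div_le_iff₀ (by positivity), mul_comm]
    exact sum_minCollisions_le (by omega) n

lemma two_mul_pigeonT (Q n : ℕ) :
    2 * pigeonT Q n = ((∑ k ∈ Icc 1 n, minCollisions (Q ^ k) n : ℕ) : ℝ) := by
  unfold pigeonT minCollisions
  ring

lemma tendsto_pigeonT_div {Q : ℕ} (hQ : 1 < Q) :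
    Tendsto (fun n : ℕ => pigeonT Q n / ((n : ℝ) * (n - 1))) atTop
      (𝓝 (1 / (2 * ((Q : ℝ) - 1)))) := by
  have h := ((tendsto_sum_minCollisions_div_sq hQ).mul
    (tendsto_natCast_div_add_atTop (-1 : ℝ))).div_const 2
  rw [mul_one, div_eq_mul_inv, ← mul_inv, ← one_div, mul_comm _ (2 : ℝ)] at h
  refine h.congr' ?_
  filter_upwards [eventually_ge_atTop 2] with n hn
  have hn1 : (1 : ℝ) < n := by exact_mod_cast hn
  have hpig : pigeonT Q n = (∑ k ∈ Icc 1 n, minCollisions (Q ^ k) n : ℝ) / 2 := by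
    rw [← Nat.cast_sum, ← two_mul_pigeonT]; ring
  rw [hpig, ← sub_eq_add_neg]
  field_simp

lemma norm_le_of_norm_lt_one {F : Type*} [NormedField F] {r : ℝ} (hr0 : 0 < r) (hr1 : r < 1)
    (hval : ∀ x : F, x ≠ 0 → ∃ m : ℤ, ‖x‖ = r ^ m) {x : F} (hx : ‖x‖ < 1) : ‖x‖ ≤ r := by
  rcases eq_or_ne x 0 with rfl | hx0
  · simpa using hr0.le
  obtain ⟨m, hm⟩ := hval x hx0
  rw [hm] at hx ⊢
  have hm1 : 1 ≤ m := (zpow_lt_one_iff_right_of_lt_one₀ hr0 hr1).1 hx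
  simpa using zpow_le_zpow_right_of_le_one₀ hr0 hr1.le hm1

lemma le_pow_card_filter_le_pow {r a : ℝ} (hr0 : 0 ≤ r) (hr1 : r ≤ 1) (ha : a ≤ 1) (n : ℕ) :
    a ≤ r ^ #{k ∈ Icc 1 n | a ≤ r ^ k} := by
  set s := {k ∈ Icc 1 n | a ≤ r ^ k}
  rcases s.eq_empty_or_nonempty with hs | hs
  · simpa [hs] using ha
  have hmax : s.max' hs ∈ s := s.max'_mem hs
  have hcard : #s ≤ s.max' hs := by
    simpa using card_le_card fun k hk =>
      mem_Icc.2 ⟨(mem_Icc.1 (mem_filter.1 hk).1).1, s.le_max' k hk⟩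
  exact (mem_filter.1 hmax).2.trans (pow_le_pow_of_le_one hr0 hr1 hcard)

/-- Double counting of the pairs `(i, k)` with `a i ≤ r ^ k`. -/
lemma prod_le_pow_sum_card_filter_le_pow {ι : Type*} (D : Finset ι) {a : ι → ℝ}
    (ha0 : ∀ i ∈ D, 0 ≤ a i) (ha1 : ∀ i ∈ D, a i ≤ 1) {r : ℝ} (hr0 : 0 ≤ r) (hr1 : r ≤ 1)
    (n : ℕ) : ∏ i ∈ D, a i ≤ r ^ ∑ k ∈ Icc 1 n, #{i ∈ D | a i ≤ r ^ k} := by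
  calc ∏ i ∈ D, a i ≤ ∏ i ∈ D, r ^ #{k ∈ Icc 1 n | a i ≤ r ^ k} :=
        prod_le_prod ha0 fun i hi => le_pow_card_filter_le_pow hr0 hr1 (ha1 i hi) n
    _ = r ^ ∑ k ∈ Icc 1 n, #{i ∈ D | a i ≤ r ^ k} := by
        rw [prod_pow_eq_pow_sum]
        exact congrArg (r ^ ·) (sum_card_bipartiteAbove_eq_sum_card_bipartiteBelow _)

lemma dn_nonneg {F : Type*} [NormedField F] (E : Set F) (n : ℕ) : 0 ≤ dn E n :=
  Real.sSup_nonneg fun _ ⟨_, _, hx⟩ =>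
    hx ▸ Real.rpow_nonneg (prod_nonneg fun _ _ => norm_nonneg _) _

lemma dn_le_of_forall_prod_le {F : Type*} [NormedField F] {E : Set F} {n : ℕ} {M : ℝ}
    (hM : 0 ≤ M) (h : ∀ z : Fin n → F, (∀ i, z i ∈ E) →
      ∏ ij ∈ univ.filter (fun ij : Fin n × Fin n => ij.1 ≠ ij.2), ‖z ij.1 - z ij.2‖ ≤ M) :
    dn E n ≤ M ^ (((n : ℝ) * (n - 1))⁻¹) := by
  have hexp : 0 ≤ ((n : ℝ) * (n - 1))⁻¹ := by
    rcases n with _ | n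
    · simp
    · push_cast [add_sub_cancel_right]; positivity
  refine Real.sSup_le (fun _ ⟨z, hz, hx⟩ => hx ▸ ?_) (Real.rpow_nonneg hM _)
  exact Real.rpow_le_rpow (prod_nonneg fun _ _ => norm_nonneg _) (h z hz) hexp

section Ultrametric

variable {F : Type*} [NormedField F] [IsUltrametricDist F]

lemma norm_sub_le_one {x y : F} (hx : ‖x‖ ≤ 1) (hy : ‖y‖ ≤ 1) : ‖x - y‖ ≤ 1 := by
  simpa [sub_eq_add_neg] using
    (IsUltrametricDist.norm_add_le_max x (-y)).trans (by simpa using max_le hx hy)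

/-- The code of `x` is its first `k` digits with respect to `T` in base `π`. -/
lemma exists_digit_code {π : F} (hπ : π ≠ 0) {T : Finset F}
    (hT : ∀ x : F, ‖x‖ ≤ 1 → ∃ t ∈ T, ‖x - t‖ ≤ ‖π‖) (k : ℕ) :
    ∃ c : F → Fin k → F, (∀ x, ‖x‖ ≤ 1 → c x ∈ Fintype.piFinset fun _ => T) ∧
      ∀ x y, ‖x‖ ≤ 1 → ‖y‖ ≤ 1 → c x = c y → ‖x - y‖ ≤ ‖π‖ ^ k := by
  induction k with
  | zero =>
    exact ⟨fun _ => Fin.elim0, fun _ _ => Fintype.mem_piFinset.2 fun i => i.elim0,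
      fun x y hx hy _ => by simpa using norm_sub_le_one hx hy⟩
  | succ k ih =>
    obtain ⟨c, hcT, hc⟩ := ih
    choose! dig hdigT hdig using hT
    have hπ0 : 0 < ‖π‖ := norm_pos_iff.2 hπ
    set shift : F → F := fun x => (x - dig x) / π
    have hshift (x : F) (hx : ‖x‖ ≤ 1) : ‖shift x‖ ≤ 1 := by
      rw [norm_div, div_le_one hπ0]; exact hdig x hx
    refine ⟨fun x => Fin.cons (dig x) (c (shift x)), fun x hx => ?_, fun x y hx hy hxy => ?_⟩
    · simpa [Fintype.mem_piFinset, Fin.forall_fin_succ] using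
        ⟨hdigT x hx, fun i => Fintype.mem_piFinset.1 (hcT _ (hshift x hx)) i⟩
    · obtain ⟨hd, hcs⟩ := Fin.cons_inj.1 hxy
      have hxy' : x - y = π * (shift x - shift y) := by
        simp only [shift, hd]; field_simp; ring
      rw [hxy', norm_mul, pow_succ']
      exact mul_le_mul_of_nonneg_left (hc _ _ (hshift x hx) (hshift y hy) hcs) hπ0.le

lemma minCollisions_le_card_norm_sub_le {π : F} (hπ : π ≠ 0) {T : Finset F}
    (hT : ∀ x : F, ‖x‖ ≤ 1 → ∃ t ∈ T, ‖x - t‖ ≤ ‖π‖) {ι : Type*} [Fintype ι] [DecidableEq ι]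
    {z : ι → F} (hz : ∀ i, ‖z i‖ ≤ 1) (k : ℕ) :
    minCollisions (#T ^ k) (Fintype.card ι) ≤
      #{p : ι × ι | p.1 ≠ p.2 ∧ ‖z p.1 - z p.2‖ ≤ ‖π‖ ^ k} := by
  classical
  obtain ⟨c, hcT, hc⟩ := exists_digit_code hπ hT k
  have h := minCollisions_le_card_collisions (fun i => c (z i)) _ fun i => hcT _ (hz i)
  rw [Fintype.card_piFinset_const] at h
  refine h.trans (card_le_card fun p => ?_)
  simp only [mem_filter, mem_univ, true_and]
  exact fun ⟨hne, heq⟩ => ⟨hne, hc _ _ (hz _) (hz _) heq⟩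

theorem prod_norm_sub_le_pow_sum_minCollisions {π : F} (hπ : π ≠ 0) (hπ1 : ‖π‖ ≤ 1)
    {T : Finset F} (hT : ∀ x : F, ‖x‖ ≤ 1 → ∃ t ∈ T, ‖x - t‖ ≤ ‖π‖) {n : ℕ} {z : Fin n → F}
    (hz : ∀ i, ‖z i‖ ≤ 1) :
    ∏ ij ∈ univ.filter (fun ij : Fin n × Fin n => ij.1 ≠ ij.2), ‖z ij.1 - z ij.2‖ ≤
      ‖π‖ ^ ∑ k ∈ Icc 1 n, minCollisions (#T ^ k) n := by
  refine (prod_le_pow_sum_card_filter_le_pow _ (fun _ _ => norm_nonneg _)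
    (fun ij _ => norm_sub_le_one (hz _) (hz _)) (norm_nonneg π) hπ1 n).trans
    (pow_le_pow_of_le_one (norm_nonneg π) hπ1 (sum_le_sum fun k _ => ?_))
  simpa [filter_filter] using minCollisions_le_card_norm_sub_le hπ hT hz k

end Ultrametric

/-- Upper-bound half of the transfinite diameter computation for the ring of integers
`O = {x : ‖x‖ ≤ 1}` of a nonarchimedean local field with residue field of order `Q` and
uniformizer absolute value `r ∈ (0,1)`: for all `z_1, …, z_n ∈ O` one has
`∏_{i≠j}‖z_i - z_j‖ ≤ r^{2·T(n)}` with `T = pigeonT Q`, `T(n)/(n(n-1)) → 1/(2(Q-1))`,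
and in particular `limsup_n d_n(O) ≤ r^{1/(Q-1)}`. -/
theorem statement16 {F : Type*} [NormedField F]
    (hna : ∀ x y : F, ‖x + y‖ ≤ max ‖x‖ ‖y‖)
    (r : ℝ) (hr0 : 0 < r) (hr1 : r < 1)
    (π : F) (hπ : ‖π‖ = r)
    (hval : ∀ x : F, x ≠ 0 → ∃ m : ℤ, ‖x‖ = r ^ m)
    (Q : ℕ) (hQ : 1 < Q)
    (hres : ∃ T : Finset F, T.card = Q ∧ (∀ t ∈ T, ‖t‖ ≤ 1) ∧
      ∀ x : F, ‖x‖ ≤ 1 → ∃! t, t ∈ T ∧ ‖x - t‖ < 1) :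
    (∀ n : ℕ, ∀ z : Fin n → F, (∀ i, ‖z i‖ ≤ 1) →
        (∏ ij ∈ Finset.univ.filter (fun ij : Fin n × Fin n => ij.1 ≠ ij.2),
          ‖z ij.1 - z ij.2‖) ≤ r ^ (2 * pigeonT Q n))
    ∧ Filter.Tendsto (fun n => pigeonT Q n / ((n : ℝ) * (n - 1))) Filter.atTop
        (nhds (1 / (2 * ((Q : ℝ) - 1))))
    ∧ Filter.limsup (fun n => dn {x : F | ‖x‖ ≤ 1} n) Filter.atTop
        ≤ r ^ ((1 : ℝ) / ((Q : ℝ) - 1)) := by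
  have : IsUltrametricDist F := .isUltrametricDist_of_forall_norm_add_le_max_norm hna
  obtain ⟨T, hTcard, -, hres⟩ := hres
  have hπ0 : π ≠ 0 := by rintro rfl; simp [hr0.ne] at hπ
  have hT (x : F) (hx : ‖x‖ ≤ 1) : ∃ t ∈ T, ‖x - t‖ ≤ ‖π‖ :=
    let ⟨t, ⟨ht, hxt⟩, _⟩ := hres x hx
    ⟨t, ht, hπ ▸ norm_le_of_norm_lt_one hr0 hr1 hval hxt⟩
  have hprod (n : ℕ) (z : Fin n → F) (hz : ∀ i, ‖z i‖ ≤ 1) :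
      ∏ ij ∈ univ.filter (fun ij : Fin n × Fin n => ij.1 ≠ ij.2), ‖z ij.1 - z ij.2‖ ≤
        r ^ (2 * pigeonT Q n) := by
    rw [two_mul_pigeonT, Real.rpow_natCast, ← hπ, ← hTcard]
    exact prod_norm_sub_le_pow_sum_minCollisions hπ0 (hπ ▸ hr1.le) hT hz
  have hlim := tendsto_pigeonT_div hQ
  refine ⟨hprod, hlim, ?_⟩
  have hexp : Tendsto (fun n : ℕ => 2 * pigeonT Q n * ((n : ℝ) * (n - 1))⁻¹) atTop
      (𝓝 (1 / ((Q : ℝ) - 1))) := by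
    convert hlim.const_mul 2 using 2 with n
    · ring
    · rw [mul_one_div, ← div_div, div_self two_ne_zero]
  have hdn (n : ℕ) :
      dn {x : F | ‖x‖ ≤ 1} n ≤ r ^ (2 * pigeonT Q n * ((n : ℝ) * (n - 1))⁻¹) := by
    rw [Real.rpow_mul hr0.le]
    exact dn_le_of_forall_prod_le (by positivity) (hprod n)
  have hu := tendsto_const_nhds.rpow hexp (Or.inl hr0.ne')
  calc limsup (fun n => dn {x : F | ‖x‖ ≤ 1} n) atTop
      ≤ limsup (fun n : ℕ => r ^ (2 * pigeonT Q n * ((n : ℝ) * (n - 1))⁻¹)) atTop :=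
        limsup_le_limsup (.of_forall hdn)
          (isBoundedUnder_of ⟨0, dn_nonneg _⟩).isCoboundedUnder_le hu.isBoundedUnder_le
    _ = r ^ ((1 : ℝ) / ((Q : ℝ) - 1)) := hu.limsup_eq
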